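/- Let d ≥ 1, let Λ : M_d(ℂ) → M_d(ℂ) be a bijective CPTP linear map, and let V : M_d(ℂ) → M_d(ℂ) be a linear map. Suppose there exist states ρ₁, ρ₂ on ℂ^d ⊗ ℂ^d and p with 0 < p < 1 such that the Helstrom matrix Δ_p = p·ρ₁ − (1−p)·ρ₂ satisfies ‖(I_d ⊗ V)(Δ_p)‖₁ > ‖Δ_p‖₁. Then there exist states ρ₁', ρ₂' on ℂ^d ⊗ ℂ^d, both lying in the image of the set of states under I_d ⊗ Λ, and y with 0 < y < 1, such that Δ'_y = y·ρ₁' − (1−y)·ρ₂' satisfies ‖(I_d ⊗ V)(Δ'_y)‖₁ > ‖Δ'_y‖₁. -/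

import Mathlib

open Matrix Kronecker
open scoped ComplexOrder

/-- The trace norm of a complex matrix: the trace of the positive semidefinite
square root of `Aᴴ * A`. -/
noncomputable def traceNorm {n : Type*} [Fintype n] [DecidableEq n]
    (A : Matrix n n ℂ) : ℝ :=
  (((Matrix.posSemidef_conjTranspose_mul_self A).1.eigenvectorUnitary.1 *
      diagonal ((fun x : ℝ => (x : ℂ)) ∘ (fun x : ℝ => √x) ∘ (Matrix.posSemidef_conjTranspose_mul_self A).1.eigenvalues) *
      (star (Matrix.posSemidef_conjTranspose_mul_self A).1.eigenvectorUnitary :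
        Matrix n n ℂ)).trace).re

/-- A state: a positive semidefinite matrix of trace one. -/
def IsState {n : Type*} [Fintype n] [DecidableEq n] (ρ : Matrix n n ℂ) : Prop :=
  ρ.PosSemidef ∧ ρ.trace = 1

/-- A trace-preserving linear map on matrices. -/
def TracePreserving {d : ℕ} (Φ : Matrix (Fin d) (Fin d) ℂ →ₗ[ℂ] Matrix (Fin d) (Fin d) ℂ) : Prop :=
  ∀ A, (Φ A).trace = A.trace

/-- A Hermiticity-preserving linear map on matrices. -/
def HermPreserving {d : ℕ} (Φ : Matrix (Fin d) (Fin d) ℂ →ₗ[ℂ] Matrix (Fin d) (Fin d) ℂ) : Prop :=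
  ∀ A, Φ Aᴴ = (Φ A)ᴴ

/-- The ampliation `I_n ⊗ Φ` of a linear map `Φ` on `d × d` matrices, acting blockwise
on `n × n` block matrices with `d × d` blocks. -/
def ampliation {n d : ℕ} (Φ : Matrix (Fin d) (Fin d) ℂ →ₗ[ℂ] Matrix (Fin d) (Fin d) ℂ)
    (A : Matrix (Fin n × Fin d) (Fin n × Fin d) ℂ) :
    Matrix (Fin n × Fin d) (Fin n × Fin d) ℂ :=
  Matrix.of fun p q => Φ (Matrix.of fun i j => A (p.1, i) (q.1, j)) p.2 q.2

/-- A positive map: maps positive semidefinite matrices to positive semidefinite matrices. -/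
def PositiveMap {d : ℕ} (Φ : Matrix (Fin d) (Fin d) ℂ →ₗ[ℂ] Matrix (Fin d) (Fin d) ℂ) : Prop :=
  ∀ A, A.PosSemidef → (Φ A).PosSemidef

/-- A completely positive map: every ampliation `I_n ⊗ Φ` is a positive map. -/
def CompletelyPositive {d : ℕ}
    (Φ : Matrix (Fin d) (Fin d) ℂ →ₗ[ℂ] Matrix (Fin d) (Fin d) ℂ) : Prop :=
  ∀ n : ℕ, 1 ≤ n → ∀ A : Matrix (Fin n × Fin d) (Fin n × Fin d) ℂ,
    A.PosSemidef → (ampliation Φ A).PosSemidef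

/-- A separable state on `ℂ^m ⊗ ℂ^d`: a finite convex combination of product states. -/
def SeparableState {m d : ℕ} (ρ : Matrix (Fin m × Fin d) (Fin m × Fin d) ℂ) : Prop :=
  ∃ (k : ℕ) (w : Fin k → ℝ) (σ : Fin k → Matrix (Fin m) (Fin m) ℂ)
    (τ : Fin k → Matrix (Fin d) (Fin d) ℂ),
    (∀ i, 0 ≤ w i) ∧ (∑ i, w i) = 1 ∧ (∀ i, IsState (σ i)) ∧ (∀ i, IsState (τ i)) ∧
    ρ = ∑ i, (w i : ℂ) • (σ i ⊗ₖ τ i)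

/-! `I_d ⊗ Λ` is a bijective positive map, hence preserves Hermiticity, so the Helstrom
matrix `Δ` is the image of a Hermitian matrix `Z`. Every Hermitian `Z` is a positive multiple of
a Helstrom matrix of states: `4 Z = P - N` with the positive definite matrices
`P = (Z + 1)ᴴ (Z + 1) + 1` and `N = (Z - 1)ᴴ (Z - 1) + 1`, and writing `P = a σ₁`, `N = b σ₂`
with states `σᵢ` gives `a/(a+b) σ₁ - b/(a+b) σ₂ = 4 Z / (a + b)`. Applying `I_d ⊗ Λ` yields a
Helstrom matrix of image states equal to `s Δ` with `s > 0`, and the trace norm is positively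
homogeneous. -/

namespace Matrix

variable {ι κ : Type*} [Fintype ι] [DecidableEq ι]

lemma conjTranspose_mul_self_add_sub (A : Matrix ι ι ℂ) (c : ℂ) :
    (A + c • 1)ᴴ * (A + c • 1) - (A - c • 1)ᴴ * (A - c • 1) =
      (2 * star c) • A + (2 * c) • Aᴴ := by
  simp only [conjTranspose_add, conjTranspose_sub, conjTranspose_smul, conjTranspose_one,
    add_mul, mul_add, sub_mul, mul_sub, Matrix.smul_mul, Matrix.mul_smul, one_mul, mul_one]
  module

lemma map_conjTranspose_of_posSemidef (F : Matrix ι ι ℂ →ₗ[ℂ] Matrix κ κ ℂ)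
    (hF : ∀ A, A.PosSemidef → (F A).PosSemidef) (A : Matrix ι ι ℂ) : F Aᴴ = (F A)ᴴ := by
  have herm : ∀ c : ℂ, ((2 * star c) • F A + (2 * c) • F Aᴴ).IsHermitian := fun c => by
    rw [← map_smul, ← map_smul, ← map_add, ← conjTranspose_mul_self_add_sub, map_sub]
    exact (hF _ (posSemidef_conjTranspose_mul_self _)).isHermitian.sub
      (hF _ (posSemidef_conjTranspose_mul_self _)).isHermitian
  -- Polarization with `c = 1` and `c = i` recovers `F A` and `F Aᴴ` from Hermitian matrices.
  have h1 := (herm 1).eq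
  have hI := (herm Complex.I).eq
  simp only [conjTranspose_add, conjTranspose_smul, star_mul', star_star] at h1 hI
  linear_combination (norm := skip) (-1/4 : ℂ) • h1 + (Complex.I/4) • hI
  match_scalars <;> norm_num [Complex.ext_iff]

end Matrix

section States

variable {ι : Type*} [Fintype ι] [DecidableEq ι]

lemma IsState.nonempty {ρ : Matrix ι ι ℂ} (hρ : IsState ρ) : Nonempty ι := by
  by_contra h
  rw [not_nonempty_iff] at h
  simpa [Matrix.trace] using hρ.2

lemma Matrix.PosDef.exists_pos_smul_isState [Nonempty ι] {P : Matrix ι ι ℂ} (hP : P.PosDef) :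
    ∃ r : ℝ, 0 < r ∧ ∃ σ, IsState σ ∧ P = (r : ℂ) • σ := by
  obtain ⟨r, hr, hPr⟩ := RCLike.pos_iff_exists_ofReal.mp hP.trace_pos
  refine ⟨r, hr, ((r⁻¹ : ℝ) : ℂ) • P, ⟨hP.posSemidef.smul (by positivity), ?_⟩, ?_⟩
  · rw [trace_smul, ← hPr]
    simp [hr.ne']
  · rw [smul_smul, ← Complex.ofReal_mul, mul_inv_cancel₀ hr.ne', Complex.ofReal_one, one_smul]

lemma exists_isState_helstrom_eq_smul_sub [Nonempty ι] {P N : Matrix ι ι ℂ}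
    (hP : P.PosDef) (hN : N.PosDef) :
    ∃ (σ₁ σ₂ : Matrix ι ι ℂ) (y s : ℝ), IsState σ₁ ∧ IsState σ₂ ∧ 0 < y ∧ y < 1 ∧ 0 < s ∧
      (y : ℂ) • σ₁ - ((1 - y : ℝ) : ℂ) • σ₂ = (s : ℂ) • (P - N) := by
  obtain ⟨a, ha, σ₁, hσ₁, rfl⟩ := hP.exists_pos_smul_isState
  obtain ⟨b, hb, σ₂, hσ₂, rfl⟩ := hN.exists_pos_smul_isState
  refine ⟨σ₁, σ₂, a / (a + b), (a + b)⁻¹, hσ₁, hσ₂, by positivity,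
    (div_lt_one (by positivity)).mpr (by linarith), by positivity, ?_⟩
  have hab : (a : ℂ) + b ≠ 0 := by exact_mod_cast (by positivity : a + b ≠ 0)
  rw [smul_sub, smul_smul, smul_smul]
  congr 2
  · push_cast
    field_simp
  · push_cast
    field_simp
    ring

lemma Matrix.IsHermitian.exists_isState_helstrom_eq_smul [Nonempty ι] {Z : Matrix ι ι ℂ}
    (hZ : Z.IsHermitian) :
    ∃ (σ₁ σ₂ : Matrix ι ι ℂ) (y s : ℝ), IsState σ₁ ∧ IsState σ₂ ∧ 0 < y ∧ y < 1 ∧ 0 < s ∧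
      (y : ℂ) • σ₁ - ((1 - y : ℝ) : ℂ) • σ₂ = (s : ℂ) • Z := by
  have hdiff : ((Z + (1 : ℂ) • 1)ᴴ * (Z + (1 : ℂ) • 1) + 1) -
      ((Z - (1 : ℂ) • 1)ᴴ * (Z - (1 : ℂ) • 1) + 1) = (4 : ℂ) • Z := by
    rw [add_sub_add_right_eq_sub, Matrix.conjTranspose_mul_self_add_sub, hZ.eq, star_one]
    module
  obtain ⟨σ₁, σ₂, y, s, hσ₁, hσ₂, hy0, hy1, hs, heq⟩ := exists_isState_helstrom_eq_smul_sub
    (.posSemidef_add (posSemidef_conjTranspose_mul_self (Z + (1 : ℂ) • 1)) .one)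
    (.posSemidef_add (posSemidef_conjTranspose_mul_self (Z - (1 : ℂ) • 1)) .one)
  refine ⟨σ₁, σ₂, y, 4 * s, hσ₁, hσ₂, hy0, hy1, by positivity, ?_⟩
  rw [heq, hdiff, smul_smul]
  congr 1
  push_cast
  ring

end States

section Ampliation

variable {n d : ℕ}

variable (n) in
def ampliationLinearMap (Φ : Matrix (Fin d) (Fin d) ℂ →ₗ[ℂ] Matrix (Fin d) (Fin d) ℂ) :
    Matrix (Fin n × Fin d) (Fin n × Fin d) ℂ →ₗ[ℂ] Matrix (Fin n × Fin d) (Fin n × Fin d) ℂ where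
  toFun := ampliation Φ
  map_add' A B := by
    ext p q
    exact congrFun₂ (map_add Φ (of fun i j => A (p.1, i) (q.1, j))
      (of fun i j => B (p.1, i) (q.1, j))) p.2 q.2
  map_smul' c A := by
    ext p q
    exact congrFun₂ (map_smul Φ c (of fun i j => A (p.1, i) (q.1, j))) p.2 q.2

@[simp]
lemma ampliationLinearMap_apply (Φ : Matrix (Fin d) (Fin d) ℂ →ₗ[ℂ] Matrix (Fin d) (Fin d) ℂ)
    (A : Matrix (Fin n × Fin d) (Fin n × Fin d) ℂ) :
    ampliationLinearMap n Φ A = ampliation Φ A := rfl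

lemma ampliation_conjTranspose {Φ : Matrix (Fin d) (Fin d) ℂ →ₗ[ℂ] Matrix (Fin d) (Fin d) ℂ}
    (hCP : CompletelyPositive Φ) (hn : 1 ≤ n) (A : Matrix (Fin n × Fin d) (Fin n × Fin d) ℂ) :
    ampliation Φ Aᴴ = (ampliation Φ A)ᴴ :=
  Matrix.map_conjTranspose_of_posSemidef (ampliationLinearMap n Φ) (hCP n hn) A

lemma ampliation_ampliation (Φ Ψ : Matrix (Fin d) (Fin d) ℂ →ₗ[ℂ] Matrix (Fin d) (Fin d) ℂ)
    (A : Matrix (Fin n × Fin d) (Fin n × Fin d) ℂ) :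
    ampliation Φ (ampliation Ψ A) = ampliation (Φ ∘ₗ Ψ) A := rfl

lemma ampliation_id (A : Matrix (Fin n × Fin d) (Fin n × Fin d) ℂ) :
    ampliation LinearMap.id A = A := rfl

lemma ampliation_bijective {Φ : Matrix (Fin d) (Fin d) ℂ →ₗ[ℂ] Matrix (Fin d) (Fin d) ℂ}
    (hΦ : Function.Bijective Φ) : Function.Bijective (ampliation (n := n) Φ) := by
  let e := LinearEquiv.ofBijective Φ hΦ
  refine Function.bijective_iff_has_inverse.mpr
    ⟨ampliation e.symm.toLinearMap, fun A => ?_, fun A => ?_⟩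
  · rw [ampliation_ampliation, show e.symm.toLinearMap ∘ₗ Φ = LinearMap.id from
      LinearMap.ext e.symm_apply_apply, ampliation_id]
  · rw [ampliation_ampliation, show Φ ∘ₗ e.symm.toLinearMap = LinearMap.id from
      LinearMap.ext e.apply_symm_apply, ampliation_id]

lemma trace_ampliation {Φ : Matrix (Fin d) (Fin d) ℂ →ₗ[ℂ] Matrix (Fin d) (Fin d) ℂ}
    (hΦ : TracePreserving Φ) (A : Matrix (Fin n × Fin d) (Fin n × Fin d) ℂ) :
    (ampliation Φ A).trace = A.trace := by
  simp only [Matrix.trace, Matrix.diag, ampliation, Matrix.of_apply, Fintype.sum_prod_type]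
  exact Finset.sum_congr rfl fun i _ => hΦ _

lemma IsState.ampliation {Φ : Matrix (Fin d) (Fin d) ℂ →ₗ[ℂ] Matrix (Fin d) (Fin d) ℂ}
    (hTP : TracePreserving Φ) (hCP : CompletelyPositive Φ) (hn : 1 ≤ n)
    {ρ : Matrix (Fin n × Fin d) (Fin n × Fin d) ℂ} (hρ : IsState ρ) :
    IsState (ampliation Φ ρ) :=
  ⟨hCP n hn ρ hρ.1, by rw [trace_ampliation hTP, hρ.2]⟩

end Ampliation

lemma traceNorm_ofReal_smul {ι : Type*} [Fintype ι] [DecidableEq ι] {s : ℝ} (hs : 0 ≤ s)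
    (A : Matrix ι ι ℂ) : traceNorm ((s : ℂ) • A) = s * traceNorm A := by
  have hcfc : ∀ B : Matrix ι ι ℂ, traceNorm B = (cfc Real.sqrt (Bᴴ * B)).trace.re := fun B => by
    rw [(Matrix.posSemidef_conjTranspose_mul_self B).1.cfc_eq]
    rfl
  have hB : ((s : ℂ) • A)ᴴ * ((s : ℂ) • A) = (s ^ 2 : ℝ) • (Aᴴ * A) := by
    rw [conjTranspose_smul, Matrix.smul_mul, Matrix.mul_smul, smul_smul, Complex.star_def,
      Complex.conj_ofReal, ← Complex.ofReal_mul, ← sq, Complex.coe_smul]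
  have hAA : IsSelfAdjoint (Aᴴ * A) := (posSemidef_conjTranspose_mul_self A).isHermitian
  have hsqrt : (fun x : ℝ => √((s ^ 2 : ℝ) • x)) = fun x => s * √x := by
    funext x
    rw [smul_eq_mul, Real.sqrt_mul (sq_nonneg s), Real.sqrt_sq hs]
  rw [hcfc, hcfc, hB, ← cfc_comp_smul (s ^ 2 : ℝ) Real.sqrt (Aᴴ * A), hsqrt,
    cfc_const_mul s Real.sqrt (Aᴴ * A) Real.continuous_sqrt.continuousOn,
    Matrix.trace_smul, Complex.smul_re, smul_eq_mul]

theorem helstrom_witness_in_image_general (d : ℕ)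
    (Λ : Matrix (Fin d) (Fin d) ℂ →ₗ[ℂ] Matrix (Fin d) (Fin d) ℂ)
    (hΛTP : TracePreserving Λ) (hΛCP : CompletelyPositive Λ)
    (hΛbij : Function.Bijective Λ)
    (V : Matrix (Fin d) (Fin d) ℂ →ₗ[ℂ] Matrix (Fin d) (Fin d) ℂ)
    (h : ∃ (ρ₁ ρ₂ : Matrix (Fin d × Fin d) (Fin d × Fin d) ℂ) (p : ℝ),
      IsState ρ₁ ∧ IsState ρ₂ ∧ 0 < p ∧ p < 1 ∧
        traceNorm (ampliation V ((p : ℂ) • ρ₁ - ((1 - p : ℝ) : ℂ) • ρ₂)) >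
          traceNorm ((p : ℂ) • ρ₁ - ((1 - p : ℝ) : ℂ) • ρ₂)) :
    ∃ (ρ₁' ρ₂' : Matrix (Fin d × Fin d) (Fin d × Fin d) ℂ) (y : ℝ),
      IsState ρ₁' ∧ IsState ρ₂' ∧
      (∃ ρ, IsState ρ ∧ ampliation Λ ρ = ρ₁') ∧
      (∃ ρ, IsState ρ ∧ ampliation Λ ρ = ρ₂') ∧
      0 < y ∧ y < 1 ∧
        traceNorm (ampliation V ((y : ℂ) • ρ₁' - ((1 - y : ℝ) : ℂ) • ρ₂')) >
          traceNorm ((y : ℂ) • ρ₁' - ((1 - y : ℝ) : ℂ) • ρ₂') := by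
  obtain ⟨ρ₁, ρ₂, p, hρ₁, hρ₂, -, -, hgt⟩ := h
  have : Nonempty (Fin d × Fin d) := hρ₁.nonempty
  have hd : 1 ≤ d := Fin.pos_iff_nonempty.mpr (this.map Prod.fst)
  set Δ := (p : ℂ) • ρ₁ - ((1 - p : ℝ) : ℂ) • ρ₂
  have hΔ : Δ.IsHermitian :=
    (hρ₁.1.1.smul (Complex.conj_ofReal p)).sub (hρ₂.1.1.smul (Complex.conj_ofReal _))
  obtain ⟨Z, hZΔ⟩ := (ampliation_bijective hΛbij).2 Δ
  have hZ : Z.IsHermitian := (ampliation_bijective hΛbij).1 <| by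
    rw [ampliation_conjTranspose hΛCP hd, hZΔ, hΔ.eq]
  obtain ⟨σ₁, σ₂, y, s, hσ₁, hσ₂, hy0, hy1, hs, hσZ⟩ := hZ.exists_isState_helstrom_eq_smul
  refine ⟨_, _, y, hσ₁.ampliation hΛTP hΛCP hd, hσ₂.ampliation hΛTP hΛCP hd,
    ⟨σ₁, hσ₁, rfl⟩, ⟨σ₂, hσ₂, rfl⟩, hy0, hy1, ?_⟩
  have hσΔ : (y : ℂ) • ampliation Λ σ₁ - ((1 - y : ℝ) : ℂ) • ampliation Λ σ₂ = (s : ℂ) • Δ := by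
    simpa only [ampliationLinearMap_apply, map_sub, map_smul, hZΔ]
      using congrArg (ampliationLinearMap d Λ) hσZ
  rw [hσΔ, ← ampliationLinearMap_apply, map_smul, ampliationLinearMap_apply,
    traceNorm_ofReal_smul hs.le, traceNorm_ofReal_smul hs.le]
  exact mul_lt_mul_of_pos_left hgt hs

/-- If some Helstrom matrix on `ℂ^d ⊗ ℂ^d` witnesses a trace-norm increase under
`I_d ⊗ V`, then such a witness can be built from states lying in the image of the set of
states under `I_d ⊗ Λ`, for any bijective CPTP map `Λ`. -/
theorem helstrom_witness_in_image (d : ℕ) (hd : 1 ≤ d)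
    (Λ : Matrix (Fin d) (Fin d) ℂ →ₗ[ℂ] Matrix (Fin d) (Fin d) ℂ)
    (hΛTP : TracePreserving Λ) (hΛCP : CompletelyPositive Λ)
    (hΛbij : Function.Bijective Λ)
    (V : Matrix (Fin d) (Fin d) ℂ →ₗ[ℂ] Matrix (Fin d) (Fin d) ℂ)
    (h : ∃ (ρ₁ ρ₂ : Matrix (Fin d × Fin d) (Fin d × Fin d) ℂ) (p : ℝ),
      IsState ρ₁ ∧ IsState ρ₂ ∧ 0 < p ∧ p < 1 ∧
        traceNorm (ampliation V ((p : ℂ) • ρ₁ - ((1 - p : ℝ) : ℂ) • ρ₂)) >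
          traceNorm ((p : ℂ) • ρ₁ - ((1 - p : ℝ) : ℂ) • ρ₂)) :
    ∃ (ρ₁' ρ₂' : Matrix (Fin d × Fin d) (Fin d × Fin d) ℂ) (y : ℝ),
      IsState ρ₁' ∧ IsState ρ₂' ∧
      (∃ ρ, IsState ρ ∧ ampliation Λ ρ = ρ₁') ∧
      (∃ ρ, IsState ρ ∧ ampliation Λ ρ = ρ₂') ∧
      0 < y ∧ y < 1 ∧
        traceNorm (ampliation V ((y : ℂ) • ρ₁' - ((1 - y : ℝ) : ℂ) • ρ₂')) >
          traceNorm ((y : ℂ) • ρ₁' - ((1 - y : ℝ) : ℂ) • ρ₂') :=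
  helstrom_witness_in_image_general d Λ hΛTP hΛCP hΛbij V h
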